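/- arXiv:2509.24707 — 4 statements merged into one kernel-verified Lean document; each statement's English description precedes it below -/
import Mathlib

section
/- Let L/K be a finite Galois extension of fields and let A be an (associative, unital) L-algebra. Then the map φ_A : L ⊗_K A → ∏_{σ ∈ Gal(L/K)} A defined on simple tensors by φ_A(a ⊗ b) = (σ(a)·b)_{σ ∈ Gal(L/K)}, where σ(a)·b denotes the image of σ(a) under the structure map L → A multiplied by b, is a bijective K-algebra homomorphism; here the target ∏_{σ ∈ Gal(L/K)} A is the product ring with componentwise operations and its natural K-algebra structure. -/
open scoped TensorProduct

set_option linter.unusedSectionVars false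

section Aux
variable (K L A : Type*) [Field K] [Field L] [Algebra K L]
    [FiniteDimensional K L] [IsGalois K L]
    [Ring A] [Algebra L A] [Algebra K A] [IsScalarTower K L A]

noncomputable def galPhi : (L ⊗[K] A) →ₐ[K] ((L ≃ₐ[K] L) → A) :=
  Pi.algHom _ _ fun σ => Algebra.TensorProduct.lift
    ((IsScalarTower.toAlgHom K L A).comp (σ : L →ₐ[K] L)) (AlgHom.id K A)
    (fun x y => (Algebra.commutes (σ x) y))

lemma galPhi_tmul (a : L) (b : A) :
    galPhi K L A (a ⊗ₜ[K] b) = fun σ => algebraMap L A (σ a) * b := rfl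

lemma galPhi_bijective : Function.Bijective (galPhi K L A) := by
  classical
  have hcard : Fintype.card (L ≃ₐ[K] L) = Module.finrank K L :=
    Nat.card_eq_fintype_card.symm.trans (IsGalois.card_aut_eq_finrank K L)
  let e : (L ≃ₐ[K] L) ≃ Fin (Module.finrank K L) := Fintype.equivFinOfCardEq hcard
  let b : Module.Basis (L ≃ₐ[K] L) K L := (Module.finBasis K L).reindex e.symm
  set M : Matrix (L ≃ₐ[K] L) (L ≃ₐ[K] L) L := Matrix.of fun σ i => σ (b i) with hMdef
  have hdet : M.det ≠ 0 := by
    intro hdet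
    obtain ⟨c, hc, hcM⟩ := Matrix.exists_vecMul_eq_zero_iff.mpr hdet
    have hli : LinearIndependent L fun σ : L ≃ₐ[K] L => (σ : L →ₐ[K] L).toLinearMap :=
      (linearIndependent_algHom_toLinearMap K L L).comp
        (fun σ : L ≃ₐ[K] L => (σ : L →ₐ[K] L)) AlgEquiv.coe_algHom_injective
    have hT : ∑ σ : L ≃ₐ[K] L, c σ • ((σ : L →ₐ[K] L).toLinearMap) = 0 := by
      apply b.ext
      intro i
      have := congrFun hcM i
      simpa [hMdef, Matrix.vecMul, dotProduct, smul_eq_mul] using this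
    have := Fintype.linearIndependent_iff.mp hli c hT
    exact hc (funext this)
  have hMunit : IsUnit M.det := isUnit_iff_ne_zero.mpr hdet
  have hNM : M⁻¹ * M = 1 := Matrix.nonsing_inv_mul M hMunit
  have hMN : M * M⁻¹ = 1 := Matrix.mul_nonsing_inv M hMunit
  set Ψ : ((L ≃ₐ[K] L) → A) → L ⊗[K] A :=
    fun f => ∑ i : L ≃ₐ[K] L, b i ⊗ₜ[K] (∑ σ : L ≃ₐ[K] L, algebraMap L A (M⁻¹ i σ) * f σ)
    with hΨdef
  rw [Function.bijective_iff_has_inverse]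
  refine ⟨Ψ, ?_, ?_⟩
  · -- left inverse
    have hadd : ∀ f g, Ψ (f + g) = Ψ f + Ψ g := by
      intro f g
      simp only [hΨdef, Pi.add_apply, mul_add, Finset.sum_add_distrib,
        TensorProduct.tmul_add]
    intro x
    induction x using TensorProduct.induction_on with
    | zero => simp [hΨdef]
    | add x y hx hy => rw [map_add, hadd, hx, hy]
    | tmul a cc =>
      rw [galPhi_tmul]
      have key : ∀ i : L ≃ₐ[K] L,
          (∑ σ : L ≃ₐ[K] L, M⁻¹ i σ * σ a) = algebraMap K L (b.repr a i) := by
        intro i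
        have hv : ∀ σ : L ≃ₐ[K] L,
            σ a = ∑ j : L ≃ₐ[K] L, M σ j * algebraMap K L (b.repr a j) := by
          intro σ
          conv_lhs => rw [← b.sum_repr a]
          rw [map_sum]
          simp only [hMdef, Matrix.of_apply, Algebra.smul_def, map_mul,
            AlgEquiv.commutes]
          exact Finset.sum_congr rfl fun j _ => mul_comm _ _
        calc (∑ σ : L ≃ₐ[K] L, M⁻¹ i σ * σ a)
            = (M⁻¹.mulVec (M.mulVec (fun j => algebraMap K L (b.repr a j)))) i := by
              simp only [Matrix.mulVec, dotProduct]
              exact Finset.sum_congr rfl fun σ _ => by rw [hv σ]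
          _ = algebraMap K L (b.repr a i) := by
              rw [Matrix.mulVec_mulVec, hNM, Matrix.one_mulVec]
      calc Ψ (fun σ => algebraMap L A (σ a) * cc)
          = ∑ i : L ≃ₐ[K] L, b i ⊗ₜ[K] ((b.repr a i) • cc) := by
            refine Finset.sum_congr rfl fun i _ => ?_
            congr 1
            rw [Algebra.smul_def, IsScalarTower.algebraMap_apply K L A, ← key i,
              map_sum, Finset.sum_mul]
            refine Finset.sum_congr rfl fun σ _ => ?_
            simp only [map_mul, mul_assoc]
        _ = (∑ i : L ≃ₐ[K] L, (b.repr a i) • b i) ⊗ₜ[K] cc := by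
            rw [TensorProduct.sum_tmul]
            exact Finset.sum_congr rfl fun i _ => (TensorProduct.smul_tmul _ _ _).symm
        _ = a ⊗ₜ[K] cc := by rw [b.sum_repr a]
  · -- right inverse
    intro f
    funext τ
    have h1 : galPhi K L A (Ψ f) τ
        = ∑ i : L ≃ₐ[K] L, algebraMap L A (τ (b i)) *
            (∑ σ : L ≃ₐ[K] L, algebraMap L A (M⁻¹ i σ) * f σ) := by
      rw [hΨdef]
      rw [map_sum]
      rw [Finset.sum_apply]
      exact Finset.sum_congr rfl fun i _ => by rw [galPhi_tmul]
    rw [h1]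
    calc ∑ i : L ≃ₐ[K] L, algebraMap L A (τ (b i)) *
            (∑ σ : L ≃ₐ[K] L, algebraMap L A (M⁻¹ i σ) * f σ)
        = ∑ i : L ≃ₐ[K] L, ∑ σ : L ≃ₐ[K] L,
            algebraMap L A (M τ i * M⁻¹ i σ) * f σ := by
          refine Finset.sum_congr rfl fun i _ => ?_
          rw [Finset.mul_sum]
          refine Finset.sum_congr rfl fun σ _ => ?_
          simp only [map_mul, mul_assoc]
          rfl
      _ = ∑ σ : L ≃ₐ[K] L, ∑ i : L ≃ₐ[K] L,
            algebraMap L A (M τ i * M⁻¹ i σ) * f σ := Finset.sum_comm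
      _ = ∑ σ : L ≃ₐ[K] L, algebraMap L A ((M * M⁻¹) τ σ) * f σ := by
          refine Finset.sum_congr rfl fun σ _ => ?_
          rw [Matrix.mul_apply, map_sum, Finset.sum_mul]
      _ = f τ := by rw [hMN]; simp [Matrix.one_apply, apply_ite]
end Aux

/-- For a finite Galois extension `L/K` and an `L`-algebra `A`, the map
`L ⊗_K A → ∏_{σ ∈ Gal(L/K)} A`, `a ⊗ b ↦ (σ(a)·b)_σ`, is a bijective `K`-algebra
homomorphism. -/
theorem tensor_galois_algebra_equiv (K L A : Type*) [Field K] [Field L] [Algebra K L]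
    [FiniteDimensional K L] [IsGalois K L]
    [Ring A] [Algebra L A] [Algebra K A] [IsScalarTower K L A] :
    ∃ φ : (L ⊗[K] A) →ₐ[K] ((L ≃ₐ[K] L) → A),
      (∀ (a : L) (b : A), φ (a ⊗ₜ[K] b) = fun σ => algebraMap L A (σ a) * b) ∧
      Function.Bijective φ := by
  exact ⟨galPhi K L A, galPhi_tmul K L A, galPhi_bijective K L A⟩
end

section
/- Let L/K be a finite Galois extension of fields and let M be an L-module (an L-vector space). Then the K-linear map φ_M : L ⊗_K M → ∏_{σ ∈ Gal(L/K)} M defined on simple tensors by φ_M(n ⊗ m) = (σ(n) • m)_{σ ∈ Gal(L/K)} is bijective. -/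
open scoped TensorProduct

open Module

section Aux

variable (K L : Type*) [Field K] [Field L] [Algebra K L]
  [FiniteDimensional K L] [IsGalois K L]

set_option linter.unusedSectionVars false

/-- The `L`-linear map `L ⊗[K] L → ((L ≃ₐ[K] L) → L)`, `a ⊗ n ↦ (a * σ n)_σ`. -/
noncomputable def galPsi : L ⊗[K] L →ₗ[L] ((L ≃ₐ[K] L) → L) :=
  LinearMap.liftBaseChange L (LinearMap.pi fun σ : L ≃ₐ[K] L => σ.toLinearMap)

lemma galPsi_tmul (a n : L) : galPsi K L (a ⊗ₜ[K] n) = fun σ => a * σ n := by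
  ext σ
  simp [galPsi, LinearMap.liftBaseChange_tmul, Pi.smul_apply, smul_eq_mul]

lemma galPsi_bijective : Function.Bijective (galPsi K L) := by
  classical
  set n := finrank K L with hn
  let b : Basis (Fin n) K L := finBasis K L
  let e : (L ≃ₐ[K] L) ≃ Fin n := Fintype.equivFinOfCardEq (Nat.card_eq_fintype_card.symm.trans (IsGalois.card_aut_eq_finrank K L))
  -- character independence
  have hLI : LinearIndependent L (fun σ : L ≃ₐ[K] L => (σ : L → L)) := by
    refine (linearIndependent_monoidHom L L).comp
      (fun σ : L ≃ₐ[K] L => ((σ : L →ₐ[K] L) : L →* L)) ?_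
    intro σ τ h
    ext x
    exact DFunLike.congr_fun h x
  -- matrix of values on the basis
  let A : Matrix (Fin n) (Fin n) L := fun j i => (e.symm j) (b i)
  have hrows : LinearIndependent L (fun j => A j) := by
    rw [Fintype.linearIndependent_iff]
    intro c hc
    have hc' : ∀ i, ∑ j, c j * (e.symm j) (b i) = 0 := by
      intro i
      have := congr_fun hc i
      simpa [A, Finset.sum_apply, smul_eq_mul] using this
    have hfun : ∑ j, c j • ((e.symm j : L ≃ₐ[K] L) : L → L) = 0 := by
      funext x
      have hx : x = ∑ i, b.repr x i • b i := (b.sum_repr x).symm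
      have key : ∀ σ : L ≃ₐ[K] L, σ x = ∑ i, b.repr x i • σ (b i) := by
        intro σ
        conv_lhs => rw [hx]
        rw [map_sum]
        exact Finset.sum_congr rfl fun i _ => map_smul σ.toLinearMap _ _
      simp only [Pi.zero_apply, Finset.sum_apply, Pi.smul_apply, smul_eq_mul]
      calc ∑ j, c j * (e.symm j) x
          = ∑ j, ∑ i, b.repr x i • (c j * (e.symm j) (b i)) := by
            refine Finset.sum_congr rfl fun j _ => ?_
            rw [key, Finset.mul_sum]
            exact Finset.sum_congr rfl fun i _ => mul_smul_comm _ _ _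
        _ = ∑ i, b.repr x i • ∑ j, c j * (e.symm j) (b i) := by
            rw [Finset.sum_comm]
            exact Finset.sum_congr rfl fun i _ => (Finset.smul_sum).symm
        _ = 0 := by simp [hc']
    exact Fintype.linearIndependent_iff.mp (hLI.comp e.symm e.symm.injective) c hfun
  have hA : IsUnit A := Matrix.linearIndependent_rows_iff_isUnit.mp hrows
  have hmv : Function.Injective A.mulVec := Matrix.mulVec_injective_iff_isUnit.mpr hA
  -- the tensor basis
  let tb : Basis (Fin n) L (L ⊗[K] L) := Algebra.TensorProduct.basis L b
  have hinj : Function.Injective (galPsi K L) := by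
    rw [injective_iff_map_eq_zero]
    intro x hx0
    have hxrep : x = ∑ i, tb.repr x i • tb i := (tb.sum_repr x).symm
    have hval : ∀ j, A.mulVec (fun i => tb.repr x i) j = 0 := by
      intro j
      have h0 : galPsi K L x (e.symm j) = 0 := by rw [hx0]; rfl
      conv at h0 => lhs; rw [hxrep]
      simp only [map_sum, map_smul, Finset.sum_apply, Pi.smul_apply, smul_eq_mul] at h0
      rw [Matrix.mulVec, dotProduct]
      calc ∑ i, A j i * tb.repr x i
          = ∑ i, tb.repr x i * (galPsi K L (tb i)) (e.symm j) := by
            refine Finset.sum_congr rfl fun i _ => ?_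
            rw [mul_comm]
            congr 1
            simp [A, tb, Algebra.TensorProduct.basis_apply, galPsi_tmul]
        _ = 0 := h0
    have hc0 : (fun i => tb.repr x i) = 0 :=
      hmv (show A.mulVec _ = A.mulVec 0 by
        rw [Matrix.mulVec_zero]; funext j; exact hval j)
    rw [hxrep]
    simp only [funext_iff, Pi.zero_apply] at hc0
    simp [hc0]
  have hfd : FiniteDimensional L (L ⊗[K] L) := Module.Finite.of_basis tb
  have hrank : finrank L (L ⊗[K] L) = finrank L ((L ≃ₐ[K] L) → L) := by
    rw [finrank_eq_card_basis tb, finrank_fintype_fun_eq_card,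
      Fintype.card_fin, ← Nat.card_eq_fintype_card, IsGalois.card_aut_eq_finrank]
  exact ⟨hinj, (LinearMap.injective_iff_surjective_of_finrank_eq_finrank hrank).mp hinj⟩

end Aux

/-- For a finite Galois extension `L/K` and an `L`-vector space `M`, the `K`-linear map
`L ⊗_K M → ∏_{σ ∈ Gal(L/K)} M`, `n ⊗ m ↦ (σ(n) • m)_σ`, is bijective. -/
theorem tensor_galois_module_equiv (K L M : Type*) [Field K] [Field L] [Algebra K L]
    [FiniteDimensional K L] [IsGalois K L]
    [AddCommGroup M] [Module L M] [Module K M] [IsScalarTower K L M] :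
    ∃ φ : (L ⊗[K] M) →ₗ[K] ((L ≃ₐ[K] L) → M),
      (∀ (n : L) (m : M), φ (n ⊗ₜ[K] m) = fun σ => σ n • m) ∧
      Function.Bijective φ := by
  classical
  let φbil : L →ₗ[K] M →ₗ[K] ((L ≃ₐ[K] L) → M) :=
    LinearMap.mk₂ K (fun n m => fun σ => σ n • m)
      (fun n n' m => by funext σ; simp [map_add, add_smul])
      (fun k n m => by
        funext σ
        simp only [Pi.smul_apply]
        rw [show σ (k • n) = k • σ n from map_smul σ.toLinearMap k n, smul_assoc])
      (fun n m m' => by funext σ; simp [smul_add])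
      (fun k n m => by funext σ; simp only [Pi.smul_apply, smul_comm (σ n) k])
  let φ : (L ⊗[K] M) →ₗ[K] ((L ≃ₐ[K] L) → M) := TensorProduct.lift φbil
  have hφ : ∀ (n : L) (m : M), φ (n ⊗ₜ[K] m) = fun σ => σ n • m := fun n m => rfl
  -- the chain of equivalences
  let ψ : L ⊗[K] L ≃ₗ[L] ((L ≃ₐ[K] L) → L) :=
    LinearEquiv.ofBijective (galPsi K L) (galPsi_bijective K L)
  let E1 : L ⊗[K] M ≃ₗ[K] M ⊗[K] L := TensorProduct.comm K L M
  let E2 : M ⊗[L] (L ⊗[K] L) ≃ₗ[L] M ⊗[K] L :=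
    TensorProduct.AlgebraTensorModule.cancelBaseChange K L L M L
  let E3 : M ⊗[L] (L ⊗[K] L) ≃ₗ[L] M ⊗[L] ((L ≃ₐ[K] L) → L) :=
    TensorProduct.congr (LinearEquiv.refl L M) ψ
  let E4 : M ⊗[L] ((L ≃ₐ[K] L) → L) ≃ₗ[L] ∀ _ : L ≃ₐ[K] L, M ⊗[L] L :=
    TensorProduct.piRight L L M (fun _ : L ≃ₐ[K] L => L)
  let E5 : (∀ _ : L ≃ₐ[K] L, M ⊗[L] L) ≃ₗ[L] ((L ≃ₐ[K] L) → M) :=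
    LinearEquiv.piCongrRight (fun _ : L ≃ₐ[K] L => TensorProduct.rid L M)
  let E : L ⊗[K] M ≃ ((L ≃ₐ[K] L) → M) :=
    E1.toEquiv.trans <| E2.symm.toEquiv.trans <| E3.toEquiv.trans <|
      E4.toEquiv.trans E5.toEquiv
  have hE : ∀ x, φ x = E x := by
    intro x
    induction x using TensorProduct.induction_on with
    | zero => simp [E, map_zero]
    | tmul n m =>
        rw [hφ]
        show _ = E5 (E4 (E3 (E2.symm (E1 (n ⊗ₜ[K] m)))))
        rw [show E1 (n ⊗ₜ[K] m) = m ⊗ₜ[K] n from rfl]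
        rw [show E2.symm (m ⊗ₜ[K] n) = m ⊗ₜ[L] ((1 : L) ⊗ₜ[K] n) from rfl]
        have h3 : E3 (m ⊗ₜ[L] ((1 : L) ⊗ₜ[K] n)) = m ⊗ₜ[L] (fun σ => σ n) := by
          simp only [E3, TensorProduct.congr_tmul, LinearEquiv.refl_apply]
          congr 1
          show galPsi K L ((1 : L) ⊗ₜ[K] n) = _
          rw [galPsi_tmul]
          simp
        rw [h3]
        rw [show E4 (m ⊗ₜ[L] (fun σ => σ n)) = fun σ => m ⊗ₜ[L] (σ n) by
          simp [E4, TensorProduct.piRight_apply, TensorProduct.piRightHom_tmul]]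
        funext σ
        simp [E5, TensorProduct.rid_tmul]
    | add x y ihx ihy =>
        simp only [map_add, ihx, ihy, E, Equiv.trans_apply, LinearEquiv.coe_toEquiv,
          LinearEquiv.coe_toEquiv_symm]
  refine ⟨φ, hφ, ?_⟩
  have : ⇑φ = ⇑E := funext hE
  rw [this]
  exact E.bijective
end

section
/- Let K be a field, D a finite-dimensional K-algebra, and t : D → K a symmetrising trace. Then for every left D-module M, the map Hom_D(M, D) → Hom_K(M, K) sending a left D-linear map f : M → D to the K-linear map t ∘ f : M → K is a bijection. -/
/-- Let `D` be a finite-dimensional `K`-algebra with a symmetrising trace `t : D → K`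
(`t(ab) = t(ba)` and no nonzero two-sided ideal of `D` is contained in `ker t`). Then for
every left `D`-module `M`, the map `Hom_D(M, D) → Hom_K(M, K)`, `f ↦ t ∘ f`, is a
bijection. -/
theorem symmetrising_trace_hom_bijective_left (K D : Type*) [Field K] [Ring D] [Algebra K D]
    [FiniteDimensional K D] (t : D →ₗ[K] K)
    (hsymm : ∀ a b : D, t (a * b) = t (b * a))
    (hfaithful : ∀ I : TwoSidedIdeal D, (∀ x ∈ I, t x = 0) → I = ⊥)
    (M : Type*) [AddCommGroup M] [Module D M] [Module K M] [IsScalarTower K D M] :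
    ∃ g : (M →ₗ[D] D) → (M →ₗ[K] K),
      (∀ (f : M →ₗ[D] D) (x : M), g f x = t (f x)) ∧ Function.Bijective g := by
  classical
  -- key: nondegeneracy of the pairing (a, b) ↦ t (a * b)
  have key : ∀ a : D, (∀ b, t (a * b) = 0) → a = 0 := by
    intro a ha
    set carrier : Set D := {x | ∀ b, t (x * b) = 0} with hc
    have hI : ∀ x ∈ TwoSidedIdeal.mk' carrier
        (by intro b; simp)
        (by intro x y hx hy b; simp [add_mul, map_add, hx b, hy b])
        (by intro x hx b; simp [neg_mul, map_neg, hx b])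
        (by intro x y hy b; rw [mul_assoc, hsymm x (y * b), mul_assoc]; exact hy _)
        (by intro x y hx b; rw [mul_assoc]; exact hx _), t x = 0 := by
      intro x hx
      rw [TwoSidedIdeal.mem_mk'] at hx
      simpa using hx 1
    have := hfaithful _ hI
    have hmem : a ∈ (⊥ : TwoSidedIdeal D) := by
      rw [← this, TwoSidedIdeal.mem_mk']
      exact ha
    exact (TwoSidedIdeal.mem_bot D).mp hmem
  -- smul commutation
  have hcomm : ∀ (c : K) (b : D) (x : M), b • (c • x) = c • (b • x) := by
    intro c b x
    have h1 : ∀ y : M, c • y = (algebraMap K D c) • y := fun y =>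
      (algebraMap_smul D c y).symm
    rw [h1 x, h1 (b • x), ← mul_smul, ← mul_smul, Algebra.commutes]
  -- the map Φ : D → Dual K D, a ↦ (b ↦ t (a * b))
  let Φ : D →ₗ[K] Module.Dual K D :=
    { toFun := fun a => t.comp (LinearMap.mulLeft K a)
      map_add' := by intro a b; ext c; simp [add_mul]
      map_smul' := by intro c a; ext b; simp [smul_mul_assoc] }
  have hΦ : ∀ a b, Φ a b = t (a * b) := fun a b => rfl
  have hΦinj : Function.Injective Φ := by
    rw [injective_iff_map_eq_zero]
    intro a ha
    exact key a fun b => by rw [← hΦ, ha]; rfl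
  let Φe : D ≃ₗ[K] Module.Dual K D :=
    Φ.linearEquivOfInjective hΦinj (Subspace.dual_finrank_eq).symm
  have hΦe : ∀ a, Φe a = Φ a := fun a => LinearMap.linearEquivOfInjective_apply _ _ a
  have hΦes : ∀ v : Module.Dual K D, Φ (Φe.symm v) = v := fun v => by
    rw [← hΦe]; exact Φe.apply_symm_apply v
  -- the candidate map g
  refine ⟨fun f => t.comp ((f : M →ₗ[D] D).restrictScalars K), fun f x => rfl, ?_, ?_⟩
  · -- injectivity
    intro f f' h
    ext x
    have h0 : ∀ y : M, t (f y) = t (f' y) := fun y => congrArg (fun F => F y) h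
    have : f x - f' x = 0 := by
      apply key
      intro b
      have : t ((f x - f' x) * b) = t (b • (f x - f' x)) := by
        rw [hsymm]; rfl
      rw [this, smul_sub, ← map_smul f, ← map_smul f', map_sub,
        h0 (b • x), sub_self]
    exact sub_eq_zero.mp this
  · -- surjectivity
    intro g2
    have ψadd : ∀ x y : M, (fun b : D => g2 (b • x)) = fun b => g2 (b • x) := fun _ _ => rfl
    let ψ : M →ₗ[K] Module.Dual K D :=
      { toFun := fun x =>
          { toFun := fun b => g2 (b • x)
            map_add' := by intro b b'; simp [add_smul]
            map_smul' := by intro c b; simp [smul_assoc] }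
        map_add' := by intro x y; ext b; simp [smul_add]
        map_smul' := by
          intro c x; ext b
          simp only [RingHom.id_apply, LinearMap.coe_mk, AddHom.coe_mk,
            LinearMap.smul_apply, smul_eq_mul, hcomm c b x, map_smul, smul_eq_mul] }
    have hψ : ∀ (x : M) (b : D), ψ x b = g2 (b • x) := fun _ _ => rfl
    let f : M →ₗ[D] D :=
      { toFun := fun x => Φe.symm (ψ x)
        map_add' := by intro x y; show Φe.symm (ψ (x + y)) = _; rw [map_add, map_add]
        map_smul' := by
          intro d x
          show Φe.symm (ψ (d • x)) = d • Φe.symm (ψ x)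
          set a := Φe.symm (ψ x) with ha
          have hΦd : Φ (d * a) = ψ (d • x) := by
            ext b
            rw [hΦ, hψ, ← mul_smul, ← hψ x (b * d), ← hΦes (ψ x), ← ha, hΦ,
              mul_assoc d a b, hsymm d (a * b), mul_assoc a b d]
          have h2 : Φe.symm (Φ (d * a)) = d * a := by
            rw [← hΦe]; exact Φe.symm_apply_apply _
          rw [← hΦd, h2, smul_eq_mul] }
    refine ⟨f, ?_⟩
    ext x
    have : t (f x) = Φ (Φe.symm (ψ x)) 1 := by
      rw [hΦ, mul_one]; rfl
    simp only [LinearMap.coe_comp, Function.comp_apply, LinearMap.coe_restrictScalars]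
    rw [show (f x : D) = Φe.symm (ψ x) from rfl] at this ⊢
    rw [this, hΦes, hψ, one_smul]
end

section
/- Let K be a field, D a finite-dimensional K-algebra, and t : D → K a symmetrising trace. Then for every right D-module M, the map Hom_{D^{op}}(M, D) → Hom_K(M, K) sending a right D-linear map f : M → D to the K-linear map t ∘ f : M → K is a bijection. -/
/-- Let `D` be a finite-dimensional `K`-algebra with a symmetrising trace `t : D → K`
(`t(ab) = t(ba)` and no nonzero two-sided ideal of `D` is contained in `ker t`). Then for
every right `D`-module `M` (i.e. left `Dᵐᵒᵖ`-module), the map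
`Hom_{Dᵒᵖ}(M, D) → Hom_K(M, K)`, `f ↦ t ∘ f`, is a bijection. -/
theorem symmetrising_trace_hom_bijective_right (K D : Type*) [Field K] [Ring D] [Algebra K D]
    [FiniteDimensional K D] (t : D →ₗ[K] K)
    (hsymm : ∀ a b : D, t (a * b) = t (b * a))
    (hfaithful : ∀ I : TwoSidedIdeal D, (∀ x ∈ I, t x = 0) → I = ⊥)
    (M : Type*) [AddCommGroup M] [Module Dᵐᵒᵖ M] [Module K M] [IsScalarTower K Dᵐᵒᵖ M] :
    ∃ g : (M →ₗ[Dᵐᵒᵖ] D) → (M →ₗ[K] K),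
      (∀ (f : M →ₗ[Dᵐᵒᵖ] D) (x : M), g f x = t (f x)) ∧ Function.Bijective g := by
  classical
  -- the bilinear form `B a b = t (a * b)`
  set B : LinearMap.BilinForm K D := (LinearMap.mul K D).compr₂ t with hBdef
  have hBapply : ∀ a b : D, B a b = t (a * b) := fun a b => rfl
  -- nondegeneracy of `B`
  have hnd : B.Nondegenerate := by
    refine LinearMap.BilinForm.Nondegenerate.ofSeparatingLeft ?_
    intro a ha
    let I : TwoSidedIdeal D := TwoSidedIdeal.mk' {x | ∀ b, t (x * b) = 0}
      (by intro b; simp)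
      (by intro x y hx hy b; simp [add_mul, map_add, hx b, hy b])
      (by intro x hx b; simp [neg_mul, map_neg, hx b])
      (by intro x y hy b
          calc t (x * y * b) = t (x * (y * b)) := by rw [mul_assoc]
          _ = t ((y * b) * x) := hsymm _ _
          _ = t (y * (b * x)) := by rw [mul_assoc]
          _ = 0 := hy _)
      (by intro x y hx b
          calc t (x * y * b) = t (x * (y * b)) := by rw [mul_assoc]
          _ = 0 := hx _)
    have hI : I = ⊥ := hfaithful I (by
      intro x hx
      have hx' : ∀ b, t (x * b) = 0 := (TwoSidedIdeal.mem_mk' _ _ _ _ _ _ x).1 hx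
      simpa using hx' 1)
    have haI : a ∈ I := (TwoSidedIdeal.mem_mk' _ _ _ _ _ _ a).2 (fun b => ha b)
    rw [hI] at haI
    exact (TwoSidedIdeal.mem_bot D).1 haI
  -- uniqueness helper
  have huniq : ∀ a a' : D, (∀ d, t (a * d) = t (a' * d)) → a = a' := by
    intro a a' h
    have h0 : ∀ d, B (a - a') d = 0 := by
      intro d; simp [hBapply, sub_mul, map_sub, h d]
    exact sub_eq_zero.1 (hnd.1 _ h0)
  set e : D ≃ₗ[K] Module.Dual K D := B.toDual hnd with hedef
  -- the map `d ↦ op d • x`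
  let act : M → (D →ₗ[K] M) := fun x =>
    { toFun := fun d => MulOpposite.op d • x
      map_add' := fun d₁ d₂ => by simp [MulOpposite.op_add, add_smul]
      map_smul' := fun k d => by
        show MulOpposite.op (k • d) • x = k • MulOpposite.op d • x
        rw [MulOpposite.op_smul, smul_assoc] }
  have act_apply : ∀ (x : M) (d : D), act x d = MulOpposite.op d • x := fun _ _ => rfl
  -- the candidate bijection
  refine ⟨fun f =>
    { toFun := fun x => t (f x)
      map_add' := fun x y => by show t (f (x + y)) = t (f x) + t (f y); rw [f.map_add, map_add]
      map_smul' := fun k x => by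
        show t (f (k • x)) = k • t (f x)
        rw [← algebraMap_smul Dᵐᵒᵖ k x, f.map_smul, algebraMap_smul, map_smul] },
    fun f x => rfl, ?_, ?_⟩
  · -- injective
    intro f₁ f₂ h
    ext x
    refine huniq _ _ (fun d => ?_)
    have h1 : t (f₁ x * d) = t (f₁ (MulOpposite.op d • x)) := by
      rw [f₁.map_smul]; rfl
    have h2 : t (f₂ x * d) = t (f₂ (MulOpposite.op d • x)) := by
      rw [f₂.map_smul]; rfl
    rw [h1, h2]
    exact congrArg (fun (φ : M →ₗ[K] K) => φ (MulOpposite.op d • x)) h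
  · -- surjective
    intro φ
    -- define `f₀ x` as the unique element with `t (f₀ x * d) = φ (op d • x)`
    set f₀ : M → D := fun x => e.symm (φ ∘ₗ act x) with hf₀
    have key : ∀ (x : M) (d : D), t (f₀ x * d) = φ (MulOpposite.op d • x) := by
      intro x d
      have := LinearMap.BilinForm.apply_toDual_symm_apply (B := B) (hB := hnd)
        (f := φ ∘ₗ act x) (v := d)
      simpa [hBapply, act_apply] using this
    have hsmul : ∀ (c : Dᵐᵒᵖ) (x : M), f₀ (c • x) = c • f₀ x := by
      intro c x
      refine huniq _ _ (fun d => ?_)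
      rw [key, MulOpposite.smul_eq_mul_unop]
      have : MulOpposite.op d • c • x = MulOpposite.op (c.unop * d) • x := by
        rw [← mul_smul]; rfl
      rw [this, ← key, ← mul_assoc]
    refine ⟨{ toFun := f₀
              map_add' := fun x y => ?_
              map_smul' := hsmul }, ?_⟩
    · refine huniq _ _ (fun d => ?_)
      rw [key, smul_add, map_add, ← key, ← key, add_mul, map_add]
    · ext x
      show t (f₀ x) = φ x
      have := key x 1
      simpa using this
end
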